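/- arXiv:1011.6083 — 3 statements merged into one kernel-verified Lean document; each statement's English description precedes it below -/
import Mathlib

section
/- For all m ≥ 1 and l ≥ 0, c(2^m · l + 2^{m−1}) = c(2^m · l) · F(m−1). -/
def c (n : Nat) : Nat := ∑ i ∈ Finset.range (n+1), (Nat.choose n i % 2) * 2^i

def F (k : Nat) : Nat := 2^(2^k) + 1

/-- Generalized version of `c` with exponents scaled by `2^e`. -/
def g (e n : Nat) : Nat := ∑ i ∈ Finset.range (n+1), (Nat.choose n i % 2) * 2^(2^e * i)

lemma lucas2 (n k : ℕ) :
    Nat.choose n k % 2 = (Nat.choose (n % 2) (k % 2) * Nat.choose (n / 2) (k / 2)) % 2 :=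
  Choose.choose_modEq_choose_mod_mul_choose_div_nat (p := 2)

lemma P1 (n i : ℕ) : Nat.choose (2*n) (2*i) % 2 = Nat.choose n i % 2 := by
  rw [lucas2]
  have h1 : 2*n % 2 = 0 := by omega
  have h2 : 2*i % 2 = 0 := by omega
  have h3 : 2*n / 2 = n := by omega
  have h4 : 2*i / 2 = i := by omega
  rw [h1, h2, h3, h4]
  simp

lemma P2 (n i : ℕ) : Nat.choose (2*n) (2*i+1) % 2 = 0 := by
  rw [lucas2]
  have h1 : 2*n % 2 = 0 := by omega
  have h2 : (2*i+1) % 2 = 1 := by omega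
  rw [h1, h2]
  simp

lemma P3 (n i : ℕ) : Nat.choose (2*n+1) (2*i) % 2 = Nat.choose n i % 2 := by
  rw [lucas2]
  have h1 : (2*n+1) % 2 = 1 := by omega
  have h2 : 2*i % 2 = 0 := by omega
  have h3 : (2*n+1) / 2 = n := by omega
  have h4 : 2*i / 2 = i := by omega
  rw [h1, h2, h3, h4]
  simp

lemma P4 (n i : ℕ) : Nat.choose (2*n+1) (2*i+1) % 2 = Nat.choose n i % 2 := by
  rw [lucas2]
  have h1 : (2*n+1) % 2 = 1 := by omega
  have h2 : (2*i+1) % 2 = 1 := by omega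
  have h3 : (2*n+1) / 2 = n := by omega
  have h4 : (2*i+1) / 2 = i := by omega
  rw [h1, h2, h3, h4]
  simp

lemma sum_pair (f : ℕ → ℕ) : ∀ n, ∑ i ∈ Finset.range (2*n+2), f i
    = ∑ i ∈ Finset.range (n+1), (f (2*i) + f (2*i+1))
  | 0 => by simp [Finset.sum_range_succ]
  | n+1 => by
    have h : 2*(n+1)+2 = (2*n+2)+1+1 := by ring
    rw [h, Finset.sum_range_succ, Finset.sum_range_succ, sum_pair f n,
      Finset.sum_range_succ (n := n+1),
      show 2*(n+1) = 2*n+2 by ring]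
    ring

lemma gR1 (e n : ℕ) : g e (2*n) = g (e+1) n := by
  unfold g
  have hext : ∑ i ∈ Finset.range (2*n+1), (Nat.choose (2*n) i % 2) * 2^(2^e*i)
      = ∑ i ∈ Finset.range (2*n+2), (Nat.choose (2*n) i % 2) * 2^(2^e*i) := by
    rw [show 2*n+2 = (2*n+1)+1 from rfl, Finset.sum_range_succ (n := 2*n+1),
      Nat.choose_eq_zero_of_lt (show 2*n < 2*n+1 by omega)]
    simp
  rw [hext, sum_pair]
  refine Finset.sum_congr rfl fun i _ => ?_
  rw [P1, P2]
  have : 2^e * (2*i) = 2^(e+1) * i := by ring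
  rw [this]
  simp

lemma gR2 (e n : ℕ) : g e (2*n+1) = g e (2*n) * (2^(2^e) + 1) := by
  rw [gR1]
  unfold g
  rw [show 2*n+1+1 = 2*n+2 from rfl, sum_pair, Finset.sum_mul]
  refine Finset.sum_congr rfl fun i _ => ?_
  rw [P3, P4]
  have e1 : 2^e * (2*i) = 2^(e+1) * i := by ring
  have e2 : 2^e * (2*i+1) = 2^(e+1) * i + 2^e := by ring
  rw [e1, e2, pow_add]
  ring

lemma G : ∀ m, 1 ≤ m → ∀ e l : ℕ,
    g e (2^m * l + 2^(m-1)) = g e (2^m * l) * F (m-1+e) := by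
  intro m hm
  induction m, hm using Nat.le_induction with
  | base =>
    intro e l
    have h1 : 2^1 * l + 2^0 = 2*l+1 := by ring
    have h2 : 2^1 * l = 2*l := by ring
    rw [h1, h2, gR2]
    simp [F]
  | succ m hm ih =>
    intro e l
    have h1 : 2^(m+1) * l + 2^(m+1-1) = 2 * (2^m * l + 2^(m-1)) := by
      obtain ⟨k, rfl⟩ : ∃ k, m = k+1 := ⟨m-1, by omega⟩
      simp only [Nat.add_sub_cancel]
      ring
    have h2 : 2^(m+1) * l = 2 * (2^m * l) := by ring
    rw [h1, h2, gR1, gR1, ih (e+1) l]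
    congr 1
    congr 1
    omega

theorem stmt8 (m l : Nat) (hm : 1 ≤ m) :
    c (2^m * l + 2^(m-1)) = c (2^m * l) * F (m-1) := by
  have hc : ∀ n, c n = g 0 n := by
    intro n
    unfold c g
    simp
  rw [hc, hc, G m hm 0 l, add_zero]
end

section
/- For all n ≥ 0 and t ≥ 2, (F(t−1) − 2) · c(2^t n + 2^{t−1}) = 3 · F(t−1) · c(2^t n + 2^{t−1} − 2). -/
open Finset

def cBase (x n : ℕ) : ℕ := ∑ i ∈ range (n + 1), (n.choose i % 2) * x ^ i

theorem sum_range_two_mul {M : Type*} [AddCommMonoid M] (N : ℕ) (f : ℕ → M) :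
    ∑ i ∈ range (2 * N), f i = ∑ j ∈ range N, (f (2 * j) + f (2 * j + 1)) := by
  induction N with
  | zero => simp
  | succ N ih => rw [Nat.mul_succ, sum_range_succ, sum_range_succ, sum_range_succ, ih, add_assoc]

theorem cBase_eq_sum_range (x : ℕ) {n N : ℕ} (hN : n < N) :
    cBase x n = ∑ i ∈ range N, (n.choose i % 2) * x ^ i := by
  refine sum_subset (range_subset_range.mpr hN) fun i _ hi => ?_
  rw [Nat.choose_eq_zero_of_lt (by simpa using hi), Nat.zero_mod, zero_mul]

theorem choose_two_mul_add_mod_two (m j : ℕ) {b e : ℕ} (hb : b < 2) (he : e < 2) :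
    (2 * m + b).choose (2 * j + e) % 2 = b.choose e * (m.choose j % 2) := by
  have lucas := Choose.choose_modEq_choose_mod_mul_choose_div_nat (n := 2 * m + b)
    (k := 2 * j + e) (p := 2)
  rw [Nat.ModEq, show (2 * m + b) % 2 = b by omega, show (2 * m + b) / 2 = m by omega,
    show (2 * j + e) % 2 = e by omega, show (2 * j + e) / 2 = j by omega] at lucas
  rw [lucas]
  interval_cases b <;> interval_cases e <;> simp

theorem cBase_two_mul_add {b : ℕ} (hb : b < 2) (x m : ℕ) :
    cBase x (2 * m + b) = (1 + b * x) * cBase (x ^ 2) m := by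
  rw [cBase_eq_sum_range x (by omega : 2 * m + b < 2 * (m + 1)), sum_range_two_mul, cBase,
    mul_sum]
  refine sum_congr rfl fun j _ => ?_
  have even := choose_two_mul_add_mod_two m j hb (e := 0) (by norm_num)
  have odd := choose_two_mul_add_mod_two m j hb (e := 1) (by norm_num)
  rw [add_zero] at even
  rw [even, odd, Nat.choose_zero_right, Nat.choose_one_right, pow_succ, pow_mul]
  ring

theorem cBase_two_pow_mul_add {k a : ℕ} (ha : a < 2 ^ k) (x m : ℕ) :
    cBase x (2 ^ k * m + a) = cBase x a * cBase (x ^ 2 ^ k) m := by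
  induction k generalizing a x with
  | zero => simp [show a = 0 by simpa using ha, cBase]
  | succ k ih =>
    obtain ⟨q, b, hb, rfl⟩ : ∃ q b, b < 2 ∧ a = 2 * q + b := ⟨a / 2, a % 2, by omega, by omega⟩
    have hq : q < 2 ^ k := by rw [pow_succ] at ha; omega
    have hsplit : 2 ^ (k + 1) * m + (2 * q + b) = 2 * (2 ^ k * m + q) + b := by ring
    rw [hsplit, cBase_two_mul_add hb, cBase_two_mul_add hb, ih hq, ← pow_mul, ← pow_succ']
    ring

theorem cBase_two_pow (x k : ℕ) : cBase x (2 ^ k) = 1 + x ^ 2 ^ k := by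
  simpa [cBase, sum_range_succ] using cBase_two_pow_mul_add (Nat.two_pow_pos k) x 1

theorem sub_one_mul_cBase_two_pow_sub_one (x r : ℕ) :
    (x - 1) * cBase x (2 ^ r - 1) = x ^ 2 ^ r - 1 := by
  induction r generalizing x with
  | zero => simp [cBase]
  | succ r ih =>
    have hsq : (x - 1) * (1 + x) = x ^ 2 - 1 := by
      rcases x with _ | x
      · simp
      · simp only [Nat.add_sub_cancel]; ring_nf; omega
    have hbits : 2 ^ (r + 1) - 1 = 2 * (2 ^ r - 1) + 1 := by
      have := Nat.one_le_two_pow (n := r); rw [pow_succ]; omega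
    rw [hbits, cBase_two_mul_add (by norm_num), one_mul, ← mul_assoc, hsq, ih, ← pow_mul,
      ← pow_succ']

theorem c_eq_cBase (n : ℕ) : c n = cBase 2 n := rfl

theorem F_eq_c_two_pow (k : ℕ) : F k = c (2 ^ k) := by
  rw [F, c_eq_cBase, cBase_two_pow, add_comm]

theorem F_sub_two_eq_three_mul_c (r : ℕ) : F (r + 1) - 2 = 3 * c (2 ^ (r + 1) - 2) := by
  have hbits : 2 ^ (r + 1) - 2 = 2 * (2 ^ r - 1) + 0 := by
    have := Nat.one_le_two_pow (n := r); rw [pow_succ]; omega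
  rw [hbits, c_eq_cBase, cBase_two_mul_add (by norm_num), zero_mul, add_zero, one_mul,
    show 3 = 2 ^ 2 - 1 from rfl, sub_one_mul_cBase_two_pow_sub_one, ← pow_mul, ← pow_succ', F]
  omega

theorem c_two_pow_mul_add {k a : ℕ} (ha : a < 2 ^ k) (m : ℕ) :
    c (2 ^ k * m + a) = c a * cBase (2 ^ 2 ^ k) m :=
  cBase_two_pow_mul_add ha 2 m

theorem stmt11 (n t : Nat) (ht : 2 ≤ t) :
    (F (t-1) - 2) * c (2^t * n + 2^(t-1)) = 3 * F (t-1) * c (2^t * n + 2^(t-1) - 2) := by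
  obtain ⟨r, rfl⟩ : ∃ r, t = r + 2 := ⟨t - 2, by omega⟩
  have hlt : 2 ^ (r + 1) < 2 ^ (r + 2) := Nat.pow_lt_pow_right (by norm_num) (by omega)
  have hge : 2 ≤ 2 ^ (r + 1) := Nat.le_self_pow (by omega) 2
  have hsub : 2 ^ (r + 2) * n + 2 ^ (r + 1) - 2 = 2 ^ (r + 2) * n + (2 ^ (r + 1) - 2) := by
    omega
  rw [show r + 2 - 1 = r + 1 from rfl, hsub, c_two_pow_mul_add hlt,
    c_two_pow_mul_add (by omega), F_sub_two_eq_three_mul_c, F_eq_c_two_pow]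
  ring
end

section
/- The generating function identity Π_{k=0}^{∞} (1 + x^{2^k} + (2x)^{2^k}) = Σ_{n=0}^{∞} c(n) x^n holds for real x with 0 < x < 1/2. -/
/-!
Reducing `(1 + X) ^ (n + 2 ^ N)` modulo 2 as `(1 + X) ^ n * (1 + X ^ (2 ^ N))` shows that, for
`n < 2 ^ N`, the row `n + 2 ^ N` of Pascal's triangle mod 2 is row `n` followed by a copy of it
shifted by `2 ^ N`; hence `c (n + 2 ^ N) = (2 ^ (2 ^ N) + 1) * c n`. Multiplying in one factor at a
time, the product over `k < N` is exactly the partial sum of the series over `n < 2 ^ N`. Since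
`c n < 2 ^ (n + 1)`, the series converges for `‖x‖ < 1/2`, and its partial sums along `2 ^ N`
tend to its sum.
-/

open Polynomial Finset Filter

section Pascal

variable {p : ℕ} [Fact p.Prime]

theorem Nat.cast_choose_add_prime_pow (N n k : ℕ) :
    ((n + p ^ N).choose k : ZMod p) =
      (if p ^ N ≤ k then (n.choose (k - p ^ N) : ZMod p) else 0) + n.choose k := by
  have hfrob : (X + 1 : (ZMod p)[X]) ^ p ^ N = X ^ p ^ N + 1 := by
    simpa using add_pow_char_pow (X : (ZMod p)[X]) 1 (p := p) (n := N)
  have hcoeff := coeff_X_add_one_pow (ZMod p) (n + p ^ N) k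
  rw [pow_add, hfrob, mul_add, mul_one, coeff_add, coeff_mul_X_pow'] at hcoeff
  simp only [coeff_X_add_one_pow] at hcoeff
  exact hcoeff.symm

theorem Nat.cast_choose_add_prime_pow_of_lt {N n k : ℕ} (hk : k < p ^ N) :
    ((n + p ^ N).choose k : ZMod p) = n.choose k := by
  rw [Nat.cast_choose_add_prime_pow, if_neg hk.not_ge, zero_add]

theorem Nat.cast_choose_add_prime_pow_add {N n : ℕ} (hn : n < p ^ N) (j : ℕ) :
    ((n + p ^ N).choose (p ^ N + j) : ZMod p) = n.choose j := by
  rw [Nat.cast_choose_add_prime_pow, if_pos (Nat.le_add_right _ _), Nat.add_sub_cancel_left,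
    Nat.choose_eq_zero_of_lt (n := n) (k := p ^ N + j) (by omega), Nat.cast_zero,
    add_zero]

end Pascal

theorem c_eq_sum_range {n M : ℕ} (hn : n < M) :
    c n = ∑ i ∈ range M, (n.choose i % 2) * 2 ^ i := by
  refine sum_subset (range_subset_range.mpr hn) fun i _ hi => ?_
  rw [Nat.choose_eq_zero_of_lt (by simpa using hi), Nat.zero_mod, zero_mul]

theorem c_add_two_pow {N n : ℕ} (hn : n < 2 ^ N) : c (n + 2 ^ N) = F N * c n := by
  have hchoose_mod {a b : ℕ} (h : (a : ZMod 2) = b) : a % 2 = b % 2 :=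
    (ZMod.natCast_eq_natCast_iff' a b 2).mp h
  have hlow : ∑ i ∈ range (2 ^ N), ((n + 2 ^ N).choose i % 2) * 2 ^ i = c n := by
    rw [c_eq_sum_range hn]
    exact sum_congr rfl fun i hi => by
      rw [hchoose_mod (Nat.cast_choose_add_prime_pow_of_lt (mem_range.mp hi))]
  have hhigh : ∑ j ∈ range (2 ^ N), ((n + 2 ^ N).choose (2 ^ N + j) % 2) * 2 ^ (2 ^ N + j) =
      2 ^ 2 ^ N * c n := by
    rw [c_eq_sum_range hn, mul_sum]
    exact sum_congr rfl fun j _ => by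
      rw [hchoose_mod (Nat.cast_choose_add_prime_pow_add hn j), pow_add]; ring
  rw [c_eq_sum_range (by omega : n + 2 ^ N < 2 ^ N + 2 ^ N), sum_range_add, hlow, hhigh, F]
  ring

theorem c_lt_two_pow (n : ℕ) : c n < 2 ^ (n + 1) :=
  calc c n ≤ ∑ i ∈ range (n + 1), 2 ^ i :=
        sum_le_sum fun _ _ =>
          mul_le_of_le_one_left (Nat.zero_le _) (Nat.le_of_lt_succ (Nat.mod_lt _ two_pos))
    _ < 2 ^ (n + 1) := Nat.geomSum_lt le_rfl fun _ => mem_range.mp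

theorem prod_range_eq_sum_range_c {R : Type*} [CommSemiring R] (x : R) (N : ℕ) :
    ∏ k ∈ range N, (1 + x ^ 2 ^ k + (2 * x) ^ 2 ^ k) =
      ∑ n ∈ range (2 ^ N), (c n : R) * x ^ n := by
  induction N with
  | zero => simp [c]
  | succ N ih =>
    have hfactor : 1 + x ^ 2 ^ N + (2 * x) ^ 2 ^ N = 1 + (F N : R) * x ^ 2 ^ N := by
      rw [F, mul_pow]; push_cast; ring
    have hshift : ∑ i ∈ range (2 ^ N), (c (2 ^ N + i) : R) * x ^ (2 ^ N + i) =
        (∑ n ∈ range (2 ^ N), (c n : R) * x ^ n) * ((F N : R) * x ^ 2 ^ N) := by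
      rw [sum_mul]
      refine sum_congr rfl fun i hi => ?_
      rw [add_comm (2 ^ N) i, c_add_two_pow (mem_range.mp hi), pow_add]
      push_cast
      ring
    rw [prod_range_succ, ih, hfactor, pow_succ, mul_two, sum_range_add, hshift]
    ring

theorem summable_c_mul_pow {𝕜 : Type*} [RCLike 𝕜] {x : 𝕜} (hx : ‖x‖ < 1 / 2) :
    Summable fun n => (c n : 𝕜) * x ^ n := by
  have hgeom : Summable fun n : ℕ => 2 * (2 * ‖x‖) ^ n :=
    (summable_geometric_of_lt_one (by positivity) (by linarith)).mul_left 2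
  refine Summable.of_norm_bounded hgeom fun n => ?_
  have hc : (c n : ℝ) ≤ 2 ^ (n + 1) := by exact_mod_cast (c_lt_two_pow n).le
  calc ‖(c n : 𝕜) * x ^ n‖ = c n * ‖x‖ ^ n := by
        rw [norm_mul, norm_pow, RCLike.norm_natCast]
    _ ≤ 2 ^ (n + 1) * ‖x‖ ^ n := by gcongr
    _ = 2 * (2 * ‖x‖) ^ n := by ring

theorem tendsto_prod_range_of_norm_lt {𝕜 : Type*} [RCLike 𝕜] {x : 𝕜}
    (hx : ‖x‖ < 1 / 2) :
    Tendsto (fun N => ∏ k ∈ range N, (1 + x ^ 2 ^ k + (2 * x) ^ 2 ^ k)) atTop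
      (nhds (∑' n, (c n : 𝕜) * x ^ n)) := by
  simp_rw [prod_range_eq_sum_range_c]
  exact (summable_c_mul_pow hx).hasSum.tendsto_sum_nat.comp
    (tendsto_pow_atTop_atTop_of_one_lt one_lt_two)

theorem stmt19 (x : ℝ) (hx : 0 < x) (hx' : x < 1/2) :
    Filter.Tendsto (fun N : Nat => ∏ k ∈ Finset.range N, (1 + x^(2^k) + (2*x)^(2^k)))
      Filter.atTop (nhds (∑' n : Nat, (c n : ℝ) * x^n)) :=
  tendsto_prod_range_of_norm_lt (by rwa [Real.norm_of_nonneg hx.le])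
end
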